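/- Let Γ be a digraph of order n with Laplacian L, and let Q be a restrictor matrix of order n. Then L is a normal matrix if and only if QᴴLQ is a normal matrix and Γ is balanced. -/

import Mathlib

/-!
The all-ones vector `e` controls everything. Always `L e = 0`, and `eᵀ L = 0` exactly when the
digraph is balanced. A normal matrix has `ker L = ker Lᴴ`, so normality of `L` forces balance.
Conversely, if `L` kills `e` from both sides then, since `Q Qᴴ = I - e eᵀ / n` is the orthogonal
projection onto `e^⊥`, we get `L = Q (Qᴴ L Q) Qᴴ`, and conjugation by the isometry `Q` preserves
and reflects normality.
-/

open Matrix

/-- A 0/1 adjacency matrix with zero diagonal. -/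
def IsAdj {m : Type*} [Fintype m] (A : Matrix m m ℝ) : Prop :=
  (∀ i j, A i j = 0 ∨ A i j = 1) ∧ ∀ i, A i i = 0

/-- Laplacian of a digraph: `L i i = d⁺(i)` and `L i j = -A i j` for `i ≠ j`. -/
noncomputable def lap {m : Type*} [Fintype m] [DecidableEq m] (A : Matrix m m ℝ) :
    Matrix m m ℝ :=
  Matrix.diagonal (fun i => ∑ j, A i j) - A

/-- Complexified Laplacian. -/
noncomputable def lapC {m : Type*} [Fintype m] [DecidableEq m] (A : Matrix m m ℝ) :
    Matrix m m ℂ :=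
  (lap A).map (fun x => (x : ℂ))

/-- Restricted numerical range `W_r(M) = { xᴴ M x : ‖x‖ = 1, xᴴ e = 0 }`. -/
noncomputable def rnr {m : Type*} [Fintype m] (M : Matrix m m ℂ) : Set ℂ :=
  { z | ∃ x : EuclideanSpace ℂ m, ‖x‖ = 1 ∧ star (x : m → ℂ) ⬝ᵥ (fun _ => (1 : ℂ)) = 0 ∧
      z = star (x : m → ℂ) ⬝ᵥ M.mulVec (x : m → ℂ) }

/-- Restrictor matrix: orthonormal columns, all orthogonal to the all-ones vector. -/
def IsRestrictor {m k : Type*} [Fintype m] [Fintype k] [DecidableEq k]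
    (Q : Matrix m k ℂ) : Prop :=
  Qᴴ * Q = 1 ∧ Qᴴ *ᵥ (fun _ => (1 : ℂ)) = 0

/-- Normal matrix: `Mᴴ M = M Mᴴ` (for real matrices, `Mᵀ M = M Mᵀ`). -/
def IsNormalM {m R : Type*} [Fintype m] [Mul (Matrix m m R)] [Star (Matrix m m R)]
    (M : Matrix m m R) : Prop := star M * M = M * star M

/-- Balanced digraph: `d⁺(i) = d⁻(i)` for every vertex. -/
def Bal {m : Type*} [Fintype m] (A : Matrix m m ℝ) : Prop :=
  ∀ i, ∑ j, A i j = ∑ j, A j i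

section Compression

variable {m k R : Type*} [Fintype m] [Fintype k]

theorem IsNormalM.conjTranspose_mulVec_eq_zero [Ring R] [StarRing R] [PartialOrder R]
    [StarOrderedRing R] [NoZeroDivisors R] {M : Matrix m m R} (hM : IsNormalM M) {x : m → R}
    (hx : M *ᵥ x = 0) : Mᴴ *ᵥ x = 0 := by
  rw [← dotProduct_star_self_eq_zero, star_mulVec, conjTranspose_conjTranspose,
    ← dotProduct_mulVec, mulVec_mulVec, ← star_eq_conjTranspose, ← hM, ← mulVec_mulVec, hx,
    mulVec_zero, dotProduct_zero]

theorem isNormalM_map_ofReal_iff (M : Matrix m m ℝ) :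
    IsNormalM (M.map ((↑) : ℝ → ℂ)) ↔ IsNormalM M := by
  have hstar : star (M.map ((↑) : ℝ → ℂ)) = (star M).map (↑) :=
    (conjTranspose_map _ fun x => (Complex.conj_ofReal x).symm).symm
  have hmul (X Y : Matrix m m ℝ) : X.map ((↑) : ℝ → ℂ) * Y.map (↑) = (X * Y).map (↑) :=
    (Matrix.map_mul (f := Complex.ofRealHom)).symm
  unfold IsNormalM
  rw [hstar, hmul, hmul]
  exact (map_injective Complex.ofReal_injective).eq_iff

variable [DecidableEq k]

theorem isNormalM_mul_mul_conjTranspose_iff [Semiring R] [StarRing R] {Q : Matrix m k R}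
    (hQ : Qᴴ * Q = 1) (N : Matrix k k R) :
    IsNormalM (Q * N * Qᴴ) ↔ IsNormalM N := by
  have hcancel (X : Matrix k k R) : Qᴴ * (Q * X * Qᴴ) * Q = X := by
    simp only [Matrix.mul_assoc, hQ, Matrix.mul_one, ← Matrix.mul_assoc Qᴴ Q, Matrix.one_mul]
  have hsandwich (X Y : Matrix k k R) : (Q * X * Qᴴ) * (Q * Y * Qᴴ) = Q * (X * Y) * Qᴴ := by
    simp only [Matrix.mul_assoc, ← Matrix.mul_assoc Qᴴ Q, hQ, Matrix.one_mul]
  have hstar : star (Q * N * Qᴴ) = Q * star N * Qᴴ := by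
    simp only [star_eq_conjTranspose, conjTranspose_mul, conjTranspose_conjTranspose,
      Matrix.mul_assoc]
  unfold IsNormalM
  rw [hstar, hsandwich, hsandwich]
  exact ⟨fun h => by rw [← hcancel (star N * N), h, hcancel], fun h => by rw [h]⟩

variable [DecidableEq m]

/-- Completing a left-invertible `Q` by one column `v` and one row `w` gives a square
matrix `[Q v]` with left inverse `[P; w]`, hence also a right inverse. -/
theorem Matrix.mul_add_vecMulVec_eq_one [CommRing R] (hcard : Fintype.card m = Fintype.card k + 1)
    {Q : Matrix m k R} {P : Matrix k m R} {v w : m → R} (hPQ : P * Q = 1) (hPv : P *ᵥ v = 0)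
    (hwQ : w ᵥ* Q = 0) (hwv : w ⬝ᵥ v = 1) :
    Q * P + vecMulVec v w = 1 := by
  have e : m ≃ k ⊕ Unit := Fintype.equivOfCardEq (by simp [hcard])
  have hleft : fromRows P (replicateRow Unit w) * fromCols Q (replicateCol Unit v) = 1 := by
    rw [fromRows_mul_fromCols, hPQ, ← replicateCol_mulVec, hPv, ← replicateRow_vecMul, hwQ,
      replicateRow_mul_replicateCol, hwv]
    ext (_ | _) (_ | _) <;> simp [one_apply]
  rw [vecMulVec_eq Unit, ← fromCols_mul_fromRows]
  exact (fromCols_mul_fromRows_eq_one_comm e _ _ _ _).2 hleft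

theorem IsRestrictor.mul_conjTranspose_add_vecMulVec {Q : Matrix m k ℂ} (hQ : IsRestrictor Q)
    (hcard : Fintype.card m = Fintype.card k + 1) :
    Q * Qᴴ + vecMulVec 1 ((Fintype.card m : ℂ)⁻¹ • 1) = 1 := by
  have h1Q : (1 : m → ℂ) ᵥ* Q = 0 := by
    simpa [star_mulVec, ← Pi.one_def] using congrArg star hQ.2
  refine mul_add_vecMulVec_eq_one hcard hQ.1 hQ.2 ?_ ?_
  · rw [smul_vecMul, h1Q, smul_zero]
  · have : (Fintype.card m : ℂ) ≠ 0 := Nat.cast_ne_zero.2 (by omega)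
    simp [this]

theorem IsRestrictor.mul_conjTranspose_mul {l : Type*} {Q : Matrix m k ℂ} (hQ : IsRestrictor Q)
    (hcard : Fintype.card m = Fintype.card k + 1) {M : Matrix m l ℂ} (hM : 1 ᵥ* M = 0) :
    Q * Qᴴ * M = M := by
  rw [← add_sub_cancel_right (Q * Qᴴ), hQ.mul_conjTranspose_add_vecMulVec hcard, Matrix.sub_mul,
    vecMulVec_mul, smul_vecMul, hM, smul_zero]
  simp

theorem IsRestrictor.mul_mul_conjTranspose {l : Type*} [Fintype l] {Q : Matrix m k ℂ}
    (hQ : IsRestrictor Q) (hcard : Fintype.card m = Fintype.card k + 1) {M : Matrix l m ℂ}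
    (hM : M *ᵥ 1 = 0) : M * (Q * Qᴴ) = M := by
  rw [← add_sub_cancel_right (Q * Qᴴ), hQ.mul_conjTranspose_add_vecMulVec hcard, Matrix.mul_sub,
    mul_vecMulVec, hM, zero_vecMulVec, Matrix.mul_one, sub_zero]

theorem IsRestrictor.isNormalM_conjTranspose_mul_mul_iff {Q : Matrix m k ℂ} (hQ : IsRestrictor Q)
    (hcard : Fintype.card m = Fintype.card k + 1) {M : Matrix m m ℂ} (hMr : M *ᵥ 1 = 0)
    (hMl : 1 ᵥ* M = 0) : IsNormalM (Qᴴ * M * Q) ↔ IsNormalM M := by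
  have hM : Q * (Qᴴ * M * Q) * Qᴴ = M := by
    simp only [← Matrix.mul_assoc]
    rw [hQ.mul_conjTranspose_mul hcard hMl, Matrix.mul_assoc, hQ.mul_mul_conjTranspose hcard hMr]
  rw [← isNormalM_mul_mul_conjTranspose_iff hQ.1, hM]

end Compression

section Laplacian

variable {m : Type*} [Fintype m] [DecidableEq m]

theorem lap_mulVec_one (A : Matrix m m ℝ) : lap A *ᵥ 1 = 0 := by
  ext i
  simp [lap, mulVec, dotProduct, diagonal_apply]

theorem one_vecMul_lap_eq_zero_iff (A : Matrix m m ℝ) : 1 ᵥ* lap A = 0 ↔ Bal A := by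
  simp [funext_iff, lap, vecMul_sub, vecMul, dotProduct, diagonal_apply, Bal, sub_eq_zero]

theorem Bal.of_isNormalM_lap {A : Matrix m m ℝ} (h : IsNormalM (lap A)) : Bal A := by
  have := h.conjTranspose_mulVec_eq_zero (lap_mulVec_one A)
  rwa [conjTranspose_eq_transpose_of_trivial, mulVec_transpose, one_vecMul_lap_eq_zero_iff] at this

theorem lapC_mulVec_one (A : Matrix m m ℝ) : lapC A *ᵥ 1 = 0 := by
  ext i
  change ((lap A).map Complex.ofRealHom *ᵥ (Complex.ofRealHom ∘ 1)) i = 0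
  rw [← RingHom.map_mulVec, lap_mulVec_one, Pi.zero_apply, map_zero]

theorem Bal.one_vecMul_lapC {A : Matrix m m ℝ} (h : Bal A) : 1 ᵥ* lapC A = 0 := by
  ext i
  change ((Complex.ofRealHom ∘ 1) ᵥ* (lap A).map Complex.ofRealHom) i = 0
  rw [← RingHom.map_vecMul, (one_vecMul_lap_eq_zero_iff A).2 h, Pi.zero_apply, map_zero]

end Laplacian

theorem normal_iff_restricted_normal_and_balanced_general {n : ℕ}
    (A : Matrix (Fin n) (Fin n) ℝ)
    (Q : Matrix (Fin n) (Fin (n - 1)) ℂ) (hQ : IsRestrictor Q) :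
    IsNormalM (lap A) ↔ (IsNormalM (Qᴴ * lapC A * Q) ∧ Bal A) := by
  rcases Nat.eq_zero_or_pos n with rfl | hn
  · simp [IsNormalM, Bal, Subsingleton.elim (α := Matrix (Fin 0) (Fin 0) _) _ 0]
  have hcard : Fintype.card (Fin n) = Fintype.card (Fin (n - 1)) + 1 := by
    simp only [Fintype.card_fin]; omega
  have hcompress (hb : Bal A) : IsNormalM (Qᴴ * lapC A * Q) ↔ IsNormalM (lap A) := by
    rw [hQ.isNormalM_conjTranspose_mul_mul_iff hcard (lapC_mulVec_one A) hb.one_vecMul_lapC]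
    exact isNormalM_map_ofReal_iff (lap A)
  refine ⟨fun h => ?_, fun ⟨h, hb⟩ => (hcompress hb).1 h⟩
  have hb : Bal A := .of_isNormalM_lap h
  exact ⟨(hcompress hb).2 h, hb⟩

/-- `L` is normal iff `QᴴLQ` is normal and `Γ` is balanced. -/
theorem normal_iff_restricted_normal_and_balanced {n : ℕ}
    (A : Matrix (Fin n) (Fin n) ℝ) (hA : IsAdj A)
    (Q : Matrix (Fin n) (Fin (n - 1)) ℂ) (hQ : IsRestrictor Q) :
    IsNormalM (lap A) ↔ (IsNormalM (Qᴴ * lapC A * Q) ∧ Bal A) :=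
  normal_iff_restricted_normal_and_balanced_general A Q hQ
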